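/- The vector field F(x,y,z) = (y², −xy, x(z−2y)) on ℝ³ is complete. Specifically: x² + y² and y² − yz are first integrals; on {y = 0} the solutions are (x₀, 0, z₀e^{x₀t}); and for y₀ ≠ 0, boundedness of (x(t),y(t)) together with z(t) = y(t) − k/y(t) (where k = y₀² − y₀z₀) gives global existence. -/

import Mathlib

/-!
The plane `{y = 0}` is invariant, and there the field `(0, 0, x z)` is integrated by an
exponential. Off it, `y' = -x y` is linear in `y`, so `y` is `y₀` times an exponential and never
vanishes; the first integral `y² - y z = k` then gives `z = y - k / y`. The remaining planar system
`x' = y²`, `y' = -x y` keeps `x² + y² = r²` and is solved for all time by `x = r tanh (r t + c)`,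
`y = r sech (r t + c)`.
-/

/-- The geodesic field `F₅,₀` of `Q₅,₀` on `h(−1)`: `(y², −xy, x(z−2y))`. -/
def F50sol (v : Fin 3 → ℝ) : Fin 3 → ℝ :=
  ![(v 1) ^ 2, -(v 0 * v 1), v 0 * (v 2 - 2 * v 1)]

open Real

theorem eq_of_forall_hasDerivAt_zero {𝕜 G : Type*} [RCLike 𝕜] [NormedAddCommGroup G]
    [NormedSpace 𝕜 G] {f : 𝕜 → G} (hf : ∀ t, HasDerivAt f 0 t) (t s : 𝕜) : f t = f s :=
  is_const_of_deriv_eq_zero (fun u => (hf u).differentiableAt) (fun u => (hf u).deriv) t s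

theorem eq_mul_exp_integral_of_hasDerivAt {f a : ℝ → ℝ} (ha : Continuous a)
    (hf : ∀ t, HasDerivAt f (a t * f t) t) (t : ℝ) :
    f t = f 0 * exp (∫ s in (0 : ℝ)..t, a s) := by
  set A : ℝ → ℝ := fun u => ∫ s in (0 : ℝ)..u, a s
  have hA : ∀ u, HasDerivAt A (a u) u := fun u => (ha.integral_hasStrictDerivAt 0 u).hasDerivAt
  have hconst : ∀ u, HasDerivAt (fun u => f u * exp (-A u)) 0 u := fun u =>
    ((hf u).mul (hA u).neg.exp).congr_deriv (by ring)
  have key := eq_of_forall_hasDerivAt_zero hconst t 0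
  simp only [A, intervalIntegral.integral_same, neg_zero, exp_zero, mul_one] at key
  rw [← key, mul_assoc, ← exp_add, neg_add_cancel, exp_zero, mul_one]

namespace F50sol

theorem hasDerivAt_iff {γ : ℝ → Fin 3 → ℝ} {t : ℝ} :
    HasDerivAt γ (F50sol (γ t)) t ↔
      HasDerivAt (fun u => γ u 0) (γ t 1 ^ 2) t ∧
      HasDerivAt (fun u => γ u 1) (-(γ t 0 * γ t 1)) t ∧
      HasDerivAt (fun u => γ u 2) (γ t 0 * (γ t 2 - 2 * γ t 1)) t := by
  rw [hasDerivAt_pi, Fin.forall_fin_succ, Fin.forall_fin_succ, Fin.forall_fin_one]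
  rfl

theorem hasDerivAt_sq_add_sq {γ : ℝ → Fin 3 → ℝ} {t : ℝ}
    (h : HasDerivAt γ (F50sol (γ t)) t) :
    HasDerivAt (fun u => γ u 0 ^ 2 + γ u 1 ^ 2) 0 t := by
  obtain ⟨hx, hy, -⟩ := hasDerivAt_iff.1 h
  exact ((hx.pow 2).add (hy.pow 2)).congr_deriv (by push_cast; ring)

theorem hasDerivAt_sq_sub_mul {γ : ℝ → Fin 3 → ℝ} {t : ℝ}
    (h : HasDerivAt γ (F50sol (γ t)) t) :
    HasDerivAt (fun u => γ u 1 ^ 2 - γ u 1 * γ u 2) 0 t := by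
  obtain ⟨-, hy, hz⟩ := hasDerivAt_iff.1 h
  exact ((hy.pow 2).sub (hy.mul hz)).congr_deriv (by push_cast; ring)

theorem hasDerivAt_of_y_eq_zero (x₀ z₀ t : ℝ) :
    HasDerivAt (fun t : ℝ => (![x₀, 0, z₀ * exp (x₀ * t)] : Fin 3 → ℝ))
      (F50sol ![x₀, 0, z₀ * exp (x₀ * t)]) t := by
  refine hasDerivAt_iff.2 ⟨?_, ?_, ?_⟩
  · simpa using hasDerivAt_const t x₀
  · simpa using hasDerivAt_const t (0 : ℝ)
  · have h := (((hasDerivAt_id t).const_mul x₀).exp.const_mul z₀)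
    exact h.congr_deriv (by simp; ring)

section IntegralCurve

variable {γ : ℝ → Fin 3 → ℝ} (hγ : ∀ t, HasDerivAt γ (F50sol (γ t)) t)
include hγ

theorem y_ne_zero (hy₀ : γ 0 1 ≠ 0) (t : ℝ) : γ t 1 ≠ 0 := by
  have hx : Continuous fun u => γ u 0 :=
    continuous_iff_continuousAt.2 fun u => (hasDerivAt_iff.1 (hγ u)).1.continuousAt
  have hy : ∀ u, HasDerivAt (fun u => γ u 1) (-γ u 0 * γ u 1) u := fun u =>
    (hasDerivAt_iff.1 (hγ u)).2.1.congr_deriv (neg_mul _ _).symm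
  rw [eq_mul_exp_integral_of_hasDerivAt hx.neg hy t]
  exact mul_ne_zero hy₀ (exp_pos _).ne'

theorem z_eq (hy₀ : γ 0 1 ≠ 0) (t : ℝ) :
    γ t 2 = γ t 1 - (γ 0 1 ^ 2 - γ 0 1 * γ 0 2) / γ t 1 := by
  have hk := eq_of_forall_hasDerivAt_zero (fun u => hasDerivAt_sq_sub_mul (hγ u)) t 0
  have hyt := y_ne_zero hγ hy₀ t
  field_simp
  linarith

end IntegralCurve

theorem hasDerivAt_of_planar {x y : ℝ → ℝ} {t : ℝ} (k : ℝ) (hx : HasDerivAt x (y t ^ 2) t)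
    (hy : HasDerivAt y (-(x t * y t)) t) (hyt : y t ≠ 0) :
    HasDerivAt (fun u => ![x u, y u, y u - k / y u]) (F50sol ![x t, y t, y t - k / y t]) t := by
  refine hasDerivAt_iff.2 ⟨by simpa using hx, by simpa using hy, ?_⟩
  have hz := hy.sub ((hasDerivAt_const t k).div hy hyt)
  exact hz.congr_deriv (by simp; field_simp; ring)

theorem hasDerivAt_tanh_sech (r c t : ℝ) :
    HasDerivAt (fun u => r * sinh (r * u + c) / cosh (r * u + c)) ((r / cosh (r * t + c)) ^ 2) t ∧
    HasDerivAt (fun u => r / cosh (r * u + c))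
      (-(r * sinh (r * t + c) / cosh (r * t + c) * (r / cosh (r * t + c)))) t := by
  have hs : HasDerivAt (fun u => r * u + c) r t := by
    simpa using ((hasDerivAt_id t).const_mul r).add_const c
  have hC := (cosh_pos (r * t + c)).ne'
  constructor
  · refine ((hs.sinh.const_mul r).div hs.cosh hC).congr_deriv ?_
    field_simp
    linear_combination r ^ 2 * cosh_sq_sub_sinh_sq (r * t + c)
  · exact ((hasDerivAt_const t r).div hs.cosh hC).congr_deriv (by field_simp; ring)

theorem exists_integralCurve_of_y_ne_zero {v : Fin 3 → ℝ} (hv : v 1 ≠ 0) :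
    ∃ γ : ℝ → Fin 3 → ℝ, γ 0 = v ∧ ∀ t, HasDerivAt γ (F50sol (γ t)) t := by
  set c := arsinh (v 0 / v 1)
  set r := v 1 * cosh c
  set k := v 1 ^ 2 - v 1 * v 2
  have hC : ∀ s, cosh s ≠ 0 := fun s => (cosh_pos s).ne'
  set x : ℝ → ℝ := fun u => r * sinh (r * u + c) / cosh (r * u + c)
  set y : ℝ → ℝ := fun u => r / cosh (r * u + c)
  have hy : ∀ u, y u ≠ 0 := fun u => div_ne_zero (mul_ne_zero hv (hC c)) (hC _)
  refine ⟨fun u => ![x u, y u, y u - k / y u], ?_, fun t => ?_⟩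
  · have hx₀ : x 0 = v 0 := by
      simp only [x, r, mul_zero, zero_add, c, sinh_arsinh]
      field_simp [hC]
    have hy₀ : y 0 = v 1 := by
      simp only [y, r, mul_zero, zero_add]
      field_simp [hC]
    have hz₀ : v 1 - k / v 1 = v 2 := by
      field_simp
      ring
    ext i
    fin_cases i <;> simp [hx₀, hy₀, hz₀]
  · obtain ⟨hxd, hyd⟩ := hasDerivAt_tanh_sech r c t
    exact hasDerivAt_of_planar k hxd hyd (hy t)

theorem exists_integralCurve (v : Fin 3 → ℝ) :
    ∃ γ : ℝ → Fin 3 → ℝ, γ 0 = v ∧ ∀ t, HasDerivAt γ (F50sol (γ t)) t := by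
  by_cases hv : v 1 = 0
  · refine ⟨fun t => ![v 0, 0, v 2 * exp (v 0 * t)], ?_, hasDerivAt_of_y_eq_zero (v 0) (v 2)⟩
    ext i
    fin_cases i <;> simp [hv]
  · exact exists_integralCurve_of_y_ne_zero hv

end F50sol

/-- `F₅,₀` on `h(−1)` is complete: `x² + y²` and `y² − yz` are first
integrals; on `{y = 0}` solutions are `(x₀, 0, z₀e^{x₀t})`; for `y 0 ≠ 0`, `y` never
vanishes and `z = y − k/y` with `k = y₀² − y₀z₀`; and every point lies on a global
integral curve. -/
theorem stmt_18 :
    (∀ (γ : ℝ → Fin 3 → ℝ) (t : ℝ), HasDerivAt γ (F50sol (γ t)) t →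
        HasDerivAt (fun u => (γ u 0) ^ 2 + (γ u 1) ^ 2) 0 t ∧
        HasDerivAt (fun u => (γ u 1) ^ 2 - γ u 1 * γ u 2) 0 t) ∧
    (∀ x₀ z₀ : ℝ, ∀ t : ℝ, HasDerivAt
        (fun t : ℝ => (![x₀, 0, z₀ * Real.exp (x₀ * t)] : Fin 3 → ℝ))
        (F50sol ![x₀, 0, z₀ * Real.exp (x₀ * t)]) t) ∧
    (∀ γ : ℝ → Fin 3 → ℝ, (∀ t, HasDerivAt γ (F50sol (γ t)) t) → γ 0 1 ≠ 0 →
        ∀ t, γ t 1 ≠ 0 ∧ γ t 2 = γ t 1 - ((γ 0 1) ^ 2 - γ 0 1 * γ 0 2) / γ t 1) ∧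
    (∀ v : Fin 3 → ℝ, ∃ γ : ℝ → Fin 3 → ℝ, γ 0 = v ∧
        ∀ t, HasDerivAt γ (F50sol (γ t)) t) := by
  refine ⟨fun γ t h => ⟨F50sol.hasDerivAt_sq_add_sq h, F50sol.hasDerivAt_sq_sub_mul h⟩,
    F50sol.hasDerivAt_of_y_eq_zero,
    fun γ hγ hy₀ t => ⟨F50sol.y_ne_zero hγ hy₀ t, F50sol.z_eq hγ hy₀ t⟩,
    F50sol.exists_integralCurve⟩
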